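/- arXiv:1402.6036 — 3 statements merged into one kernel-verified Lean document; each statement's English description precedes it below -/
import Mathlib

section
/- In the group 𝕃(p), every element g can be written uniquely in the form g = m·c + Σ_{i=1}^t m_i·x_i, where m ∈ ℤ and the m_i are integers with 0 ≤ m_i < p_i for each i ∈ {1,…,t}. That is, such integers m, m_1, …, m_t exist for every g, and they are uniquely determined by g. -/
open scoped TensorProduct

/-- The subgroup of relations `p_i • x_i − c` defining `𝕃(p)` inside the free
abelian group on the generators `x_1,…,x_t` (indexed by `Fin t`) and `c`
(indexed by `Unit`). -/
def Lrel (t : ℕ) (p : Fin t → ℕ) : AddSubgroup (FreeAbelianGroup (Fin t ⊕ Unit)) :=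
  AddSubgroup.closure
    {g | ∃ i : Fin t, g = (p i) • FreeAbelianGroup.of (Sum.inl i) -
        FreeAbelianGroup.of (Sum.inr ())}

/-- The group `𝕃(p)`, presented by generators `x_1,…,x_t,c` and relations
`p_1 x_1 = ⋯ = p_t x_t = c`. -/
abbrev LGroup (t : ℕ) (p : Fin t → ℕ) :=
  FreeAbelianGroup (Fin t ⊕ Unit) ⧸ Lrel t p

/-- The generator `x_i` of `𝕃(p)`. -/
def Lx (t : ℕ) (p : Fin t → ℕ) (i : Fin t) : LGroup t p :=
  QuotientAddGroup.mk (FreeAbelianGroup.of (Sum.inl i))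

/-- The canonical element `c` of `𝕃(p)`. -/
def Lc (t : ℕ) (p : Fin t → ℕ) : LGroup t p :=
  QuotientAddGroup.mk (FreeAbelianGroup.of (Sum.inr ()))

/-!
Every `x_i` can be traded for `c` at the rate `p_i x_i = c`, so reducing each coefficient
of an integer combination of the generators modulo `p_i` gives the normal form. For uniqueness,
the relations are respected by the residue characters `x_j ↦ δ_ij ∈ ℤ/p_i`, `c ↦ 0`, which read
off each `m_i`, and by the rational degree `x_j ↦ 1/p_j`, `c ↦ 1`, which then reads off `m`.
-/

open Finset

namespace LGroup

variable {t : ℕ} {p : Fin t → ℕ}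

theorem natCast_zsmul_Lx (i : Fin t) : (p i : ℤ) • Lx t p i = Lc t p := by
  rw [natCast_zsmul, Lx, Lc, ← QuotientAddGroup.mk_nsmul, QuotientAddGroup.eq_iff_sub_mem]
  exact AddSubgroup.subset_closure ⟨i, rfl⟩

def lift {A : Type*} [AddCommGroup A] (y : Fin t → A) (z : A) (h : ∀ i, p i • y i = z) :
    LGroup t p →+ A :=
  QuotientAddGroup.lift _ (FreeAbelianGroup.lift (Sum.elim y fun _ => z)) <| by
    rw [Lrel, AddSubgroup.closure_le]
    rintro _ ⟨i, rfl⟩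
    simp [h i]

section lift

variable {A : Type*} [AddCommGroup A] {y : Fin t → A} {z : A} {h : ∀ i, p i • y i = z}

@[simp]
theorem lift_Lx (i : Fin t) : lift y z h (Lx t p i) = y i := by
  simp [lift, Lx]

@[simp]
theorem lift_Lc : lift y z h (Lc t p) = z := by
  simp [lift, Lc]

end lift

variable (t p) in
def combination : ℤ × (Fin t → ℤ) →+ LGroup t p where
  toFun mf := mf.1 • Lc t p + ∑ i, mf.2 i • Lx t p i
  map_zero' := by simp
  map_add' mf mf' := by
    simp only [Prod.fst_add, Prod.snd_add, Pi.add_apply, add_smul, sum_add_distrib]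
    abel

theorem combination_apply (mf : ℤ × (Fin t → ℤ)) :
    combination t p mf = mf.1 • Lc t p + ∑ i, mf.2 i • Lx t p i := rfl

theorem map_combination {A : Type*} [AddCommGroup A] (f : LGroup t p →+ A)
    (mf : ℤ × (Fin t → ℤ)) :
    f (combination t p mf) = mf.1 • f (Lc t p) + ∑ i, mf.2 i • f (Lx t p i) := by
  simp [combination_apply]

theorem combination_surjective : Function.Surjective (combination t p) := by
  intro g
  induction g using QuotientAddGroup.induction_on with | H x => ?_
  let coeffs : FreeAbelianGroup (Fin t ⊕ Unit) →+ ℤ × (Fin t → ℤ) :=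
    FreeAbelianGroup.lift (Sum.elim (fun i => (0, Pi.single i 1)) fun _ => (1, 0))
  have h : (combination t p).comp coeffs = QuotientAddGroup.mk' _ := by
    refine FreeAbelianGroup.lift_ext _ _ ?_
    rintro (i | _)
    · simp [coeffs, combination_apply, Pi.single_apply, Lx]
    · simp [coeffs, combination_apply, Lc]
  exact ⟨coeffs x, DFunLike.congr_fun h x⟩

theorem combination_eq_emod (m : ℤ) (a : Fin t → ℤ) :
    combination t p (m, a)
      = combination t p (m + ∑ i, a i / p i, fun i => a i % p i) := by
  have hx (i : Fin t) : a i • Lx t p i = (a i / p i) • Lc t p + (a i % p i) • Lx t p i := by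
    conv_lhs => rw [← Int.mul_ediv_add_emod (a i) (p i)]
    rw [add_smul, mul_comm, mul_smul, natCast_zsmul_Lx]
  simp only [combination_apply, hx, sum_add_distrib, add_smul, sum_smul]
  abel

def residue (i : Fin t) : LGroup t p →+ ZMod (p i) :=
  lift (Pi.single i 1) 0 fun j => by
    rcases eq_or_ne j i with rfl | hj
    · simp
    · simp [hj]

theorem residue_combination (i : Fin t) (mf : ℤ × (Fin t → ℤ)) :
    residue i (combination t p mf) = mf.2 i := by
  simp [residue, map_combination, Pi.single_apply]

def rationalDegree (hp : ∀ i, 0 < p i) : LGroup t p →+ ℚ :=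
  lift (fun i => (p i : ℚ)⁻¹) 1 fun i => by
    rw [nsmul_eq_mul, mul_inv_cancel₀ (by exact_mod_cast (hp i).ne')]

theorem rationalDegree_combination (hp : ∀ i, 0 < p i) (mf : ℤ × (Fin t → ℤ)) :
    rationalDegree hp (combination t p mf) = mf.1 + ∑ i, (mf.2 i : ℚ) / p i := by
  simp [rationalDegree, map_combination, div_eq_mul_inv]

theorem combination_injOn (hp : ∀ i, 0 < p i) :
    Set.InjOn (combination t p) {mf | ∀ i, 0 ≤ mf.2 i ∧ mf.2 i < p i} := by
  rintro ⟨m, a⟩ ha ⟨m', a'⟩ ha' h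
  have hcoeff : a = a' := funext fun i => by
    have hi := congrArg (residue i) h
    rw [residue_combination, residue_combination, ZMod.intCast_eq_intCast_iff'] at hi
    rwa [Int.emod_eq_of_lt (ha i).1 (ha i).2, Int.emod_eq_of_lt (ha' i).1 (ha' i).2] at hi
  subst hcoeff
  have hdeg := congrArg (rationalDegree hp) h
  rw [rationalDegree_combination, rationalDegree_combination, add_left_inj] at hdeg
  exact congrArg (·, a) (Int.cast_inj.mp hdeg)

end LGroup

theorem normal_form_exists_unique_general (t : ℕ)
    (p : Fin t → ℕ) (hp : ∀ i, 0 < p i) (g : LGroup t p) :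
    ∃! mf : ℤ × (Fin t → ℤ),
      (∀ i, 0 ≤ mf.2 i ∧ mf.2 i < (p i : ℤ)) ∧
      g = mf.1 • Lc t p + ∑ i, mf.2 i • Lx t p i := by
  obtain ⟨⟨m, a⟩, rfl⟩ := LGroup.combination_surjective g
  have hemod := LGroup.combination_eq_emod (p := p) m a
  have hreduced (i : Fin t) : 0 ≤ a i % p i ∧ a i % p i < p i :=
    ⟨Int.emod_nonneg _ (by exact_mod_cast (hp i).ne'),
      Int.emod_lt_of_pos _ (by exact_mod_cast hp i)⟩
  refine ⟨(m + ∑ i, a i / p i, fun i => a i % p i), ⟨hreduced, hemod⟩, ?_⟩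
  rintro mf ⟨hmf, hg⟩
  exact LGroup.combination_injOn hp hmf hreduced (hg.symm.trans hemod)

/-- Every element `g` of `𝕃(p)` can be written uniquely as
`g = m • c + ∑ i, m_i • x_i` with `m ∈ ℤ` and `0 ≤ m_i < p_i`. -/
theorem normal_form_exists_unique (t : ℕ) (ht : 3 ≤ t)
    (p : Fin t → ℕ) (hp : ∀ i, 0 < p i) (g : LGroup t p) :
    ∃! mf : ℤ × (Fin t → ℤ),
      (∀ i, 0 ≤ mf.2 i ∧ mf.2 i < (p i : ℤ)) ∧
      g = mf.1 • Lc t p + ∑ i, mf.2 i • Lx t p i :=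
  normal_form_exists_unique_general t p hp g
end

section
/- The submonoid P of 𝕃(p) generated by x_1,…,x_t is a positive cone: if g ∈ P and −g ∈ P then g = 0. Consequently, the relation g ≤ h defined by h − g ∈ P is a translation-invariant partial order on 𝕃(p). -/
open scoped TensorProduct

/-!
The homomorphism `𝕃(p) → ℚ` with `x_i ↦ 1 / p_i` (and hence `c ↦ 1`) is well defined, and it is
strictly positive on every nonzero element of `P`. So `g` and `-g` cannot both lie in `P` unless
`g = 0`, i.e. `P` is a positive cone, and every positive cone of an abelian group defines a
translation-invariant partial order.
-/

theorem AddMonoidHom.eq_zero_or_pos_of_mem_closure {G M : Type*} [AddMonoid G] [AddCommMonoid M]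
    [PartialOrder M] [IsOrderedCancelAddMonoid M] (f : G →+ M) {s : Set G}
    (hs : ∀ x ∈ s, 0 < f x) {g : G} (hg : g ∈ AddSubmonoid.closure s) : g = 0 ∨ 0 < f g := by
  induction hg using AddSubmonoid.closure_induction with
  | mem x hx => exact .inr (hs x hx)
  | zero => exact .inl rfl
  | add a b _ _ ha hb =>
    rcases ha with rfl | ha
    · simpa using hb
    rcases hb with rfl | hb
    · simpa using Or.inr ha
    exact .inr (by simpa only [map_add] using add_pos ha hb)

def AddGroupCone.closureOfMapPos {G M : Type*} [AddCommGroup G] [AddCommGroup M] [PartialOrder M]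
    [IsOrderedAddMonoid M] (f : G →+ M) (s : Set G) (hs : ∀ x ∈ s, 0 < f x) : AddGroupCone G where
  toAddSubmonoid := AddSubmonoid.closure s
  eq_zero_of_mem_of_neg_mem' {g} hg hng := by
    refine (f.eq_zero_or_pos_of_mem_closure hs hg).resolve_right fun hpos => ?_
    rcases f.eq_zero_or_pos_of_mem_closure hs hng with h | h
    · exact hpos.ne' (by simpa using congrArg f h)
    · exact (neg_pos.mp (by simpa only [map_neg] using h)).not_gt hpos

theorem AddGroupCone.isPartialOrder_sub_mem {G : Type*} [AddCommGroup G] (C : AddGroupCone G) :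
    IsPartialOrder G (fun g h => h - g ∈ C) :=
  letI := PartialOrder.mkOfAddGroupCone C
  inferInstanceAs (IsPartialOrder G (· ≤ ·))

namespace LGroup

variable {t : ℕ} {p : Fin t → ℕ}

def weight (hp : ∀ i, 0 < p i) : LGroup t p →+ ℚ :=
  QuotientAddGroup.lift (Lrel t p)
    (FreeAbelianGroup.lift (Sum.elim (fun i => ((p i : ℚ))⁻¹) fun _ => 1)) <| by
      rw [Lrel, AddSubgroup.closure_le]
      rintro _ ⟨i, rfl⟩
      have hpi : (p i : ℚ) ≠ 0 := by exact_mod_cast (hp i).ne'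
      simp [FreeAbelianGroup.lift_apply_of, mul_inv_cancel₀ hpi]

theorem weight_Lx (hp : ∀ i, 0 < p i) (i : Fin t) : weight hp (Lx t p i) = ((p i : ℚ))⁻¹ := by
  simp [weight, Lx, FreeAbelianGroup.lift_apply_of]

def cone (hp : ∀ i, 0 < p i) : AddGroupCone (LGroup t p) :=
  AddGroupCone.closureOfMapPos (weight hp) (Set.range (Lx t p)) <| by
    rintro _ ⟨i, rfl⟩
    simpa [weight_Lx] using hp i

end LGroup

theorem positive_cone_partial_order_general (t : ℕ)
    (p : Fin t → ℕ) (hp : ∀ i, 0 < p i) :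
    (∀ g : LGroup t p,
        g ∈ AddSubmonoid.closure (Set.range (Lx t p)) →
        -g ∈ AddSubmonoid.closure (Set.range (Lx t p)) → g = 0) ∧
    IsPartialOrder (LGroup t p)
      (fun g h => h - g ∈ AddSubmonoid.closure (Set.range (Lx t p))) ∧
    (∀ g h k : LGroup t p,
        h - g ∈ AddSubmonoid.closure (Set.range (Lx t p)) →
        (k + h) - (k + g) ∈ AddSubmonoid.closure (Set.range (Lx t p))) :=
  ⟨fun _ => (LGroup.cone hp).eq_zero_of_mem_of_neg_mem',
    (LGroup.cone hp).isPartialOrder_sub_mem,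
    fun g h k hgh => by simpa only [add_sub_add_left_eq_sub] using hgh⟩

/-- The submonoid `P` of `𝕃(p)` generated by `x_1,…,x_t` is a positive cone:
if `g ∈ P` and `−g ∈ P` then `g = 0`.  Consequently the relation
`g ≤ h ↔ h − g ∈ P` is a translation-invariant partial order on `𝕃(p)`. -/
theorem positive_cone_partial_order (t : ℕ) (ht : 3 ≤ t)
    (p : Fin t → ℕ) (hp : ∀ i, 0 < p i) :
    (∀ g : LGroup t p,
        g ∈ AddSubmonoid.closure (Set.range (Lx t p)) →
        -g ∈ AddSubmonoid.closure (Set.range (Lx t p)) → g = 0) ∧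
    IsPartialOrder (LGroup t p)
      (fun g h => h - g ∈ AddSubmonoid.closure (Set.range (Lx t p))) ∧
    (∀ g h k : LGroup t p,
        h - g ∈ AddSubmonoid.closure (Set.range (Lx t p)) →
        (k + h) - (k + g) ∈ AddSubmonoid.closure (Set.range (Lx t p))) :=
  positive_cone_partial_order_general t p hp
end

section
/- For every element g of 𝕃(p), at least one of the following holds: 0 ≤ g, or g ≤ c + ω; that is, either g lies in the submonoid P generated by x_1,…,x_t, or (c + ω) − g lies in P, where ω = (t−2)·c − Σ_{i=1}^t x_i. -/
open scoped TensorProduct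

/-!
Every element of `𝕃(p)` has a normal form `∑ rᵢ xᵢ + B c` with `0 ≤ rᵢ < pᵢ`, obtained by trading
`pᵢ xᵢ` for `c`. If `B ≥ 0` the element lies in `P`. Otherwise, since `pᵢ xᵢ = c` for every `i`,
`c + ω = ∑ (pᵢ - 1) xᵢ - c`, so `c + ω - g = ∑ (pᵢ - 1 - rᵢ) xᵢ + (-1 - B) c` has nonnegative
coefficients and lies in `P`.
-/

open Finset

theorem AddSubmonoid.zsmul_mem_of_nonneg {G : Type*} [AddGroup G] (S : AddSubmonoid G) {x : G}
    (hx : x ∈ S) {n : ℤ} (hn : 0 ≤ n) : n • x ∈ S := by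
  lift n to ℕ using hn
  rw [natCast_zsmul]
  exact S.nsmul_mem hx n

variable {t : ℕ} {p : Fin t → ℕ}

def LPos (t : ℕ) (p : Fin t → ℕ) : AddSubmonoid (LGroup t p) :=
  AddSubmonoid.closure (Set.range (Lx t p))

theorem zsmul_Lx_eq_Lc (i : Fin t) : (p i : ℤ) • Lx t p i = Lc t p := by
  have h : (p i : ℤ) • FreeAbelianGroup.of (Sum.inl i) - FreeAbelianGroup.of (Sum.inr ()) ∈
      Lrel t p :=
    AddSubgroup.subset_closure ⟨i, by rw [natCast_zsmul]⟩
  rw [Lx, Lc, ← QuotientAddGroup.mk_zsmul]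
  exact QuotientAddGroup.eq_iff_sub_mem.mpr h

theorem nsmul_Lx_eq_Lc (i : Fin t) : p i • Lx t p i = Lc t p := by
  rw [← natCast_zsmul, zsmul_Lx_eq_Lc]

theorem Lx_mem_LPos (i : Fin t) : Lx t p i ∈ LPos t p :=
  AddSubmonoid.subset_closure ⟨i, rfl⟩

theorem Lc_mem_LPos (ht : 0 < t) : Lc t p ∈ LPos t p := by
  rw [← nsmul_Lx_eq_Lc ⟨0, ht⟩]
  exact AddSubmonoid.nsmul_mem _ (Lx_mem_LPos _) _

theorem sum_zsmul_Lx_add_zsmul_Lc_mem_LPos (ht : 0 < t) {a : Fin t → ℤ} {b : ℤ}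
    (ha : ∀ i, 0 ≤ a i) (hb : 0 ≤ b) : ∑ i, a i • Lx t p i + b • Lc t p ∈ LPos t p :=
  add_mem (sum_mem fun i _ => (LPos t p).zsmul_mem_of_nonneg (Lx_mem_LPos i) (ha i))
    ((LPos t p).zsmul_mem_of_nonneg (Lc_mem_LPos ht) hb)

theorem exists_eq_sum_zsmul_Lx_add_zsmul_Lc (g : LGroup t p) :
    ∃ (a : Fin t → ℤ) (b : ℤ), g = ∑ i, a i • Lx t p i + b • Lc t p := by
  obtain ⟨x, rfl⟩ := QuotientAddGroup.mk_surjective g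
  induction x using FreeAbelianGroup.induction_on with
  | zero => exact ⟨0, 0, by simp⟩
  | of y =>
    rcases y with i | u
    · refine ⟨Pi.single i 1, 0, ?_⟩
      simp [Lx, Pi.single_apply, ite_smul]
    · exact ⟨0, 1, by simp [Lc]⟩
  | neg y hy =>
    obtain ⟨a, b, h⟩ := hy
    refine ⟨-a, -b, ?_⟩
    rw [QuotientAddGroup.mk_neg, h]
    simp only [Pi.neg_apply, neg_smul, sum_neg_distrib, neg_add]
  | add y z hy hz =>
    obtain ⟨a, b, h⟩ := hy
    obtain ⟨a', b', h'⟩ := hz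
    refine ⟨a + a', b + b', ?_⟩
    rw [QuotientAddGroup.mk_add, h, h']
    simp only [Pi.add_apply, add_smul, sum_add_distrib]
    abel

theorem exists_normal_form (hp : ∀ i, 0 < p i) (g : LGroup t p) :
    ∃ (r : Fin t → ℤ) (B : ℤ), (∀ i, 0 ≤ r i ∧ r i < p i) ∧
      g = ∑ i, r i • Lx t p i + B • Lc t p := by
  obtain ⟨a, b, rfl⟩ := exists_eq_sum_zsmul_Lx_add_zsmul_Lc g
  have hp' : ∀ i, (0 : ℤ) < p i := fun i => by exact_mod_cast hp i
  refine ⟨fun i => a i % p i, b + ∑ i, a i / p i,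
    fun i => ⟨Int.emod_nonneg _ (hp' i).ne', Int.emod_lt_of_pos _ (hp' i)⟩, ?_⟩
  have hdiv : ∀ i, a i • Lx t p i = (a i % p i) • Lx t p i + (a i / p i) • Lc t p := by
    intro i
    rw [← zsmul_Lx_eq_Lc i, smul_smul, ← add_smul, mul_comm, Int.emod_add_mul_ediv]
  simp only [hdiv, sum_add_distrib, add_smul, sum_smul]
  abel

theorem Lc_add_omega_sub_eq (r : Fin t → ℤ) (B : ℤ) :
    Lc t p + (((t : ℤ) - 2) • Lc t p - ∑ i, Lx t p i) - (∑ i, r i • Lx t p i + B • Lc t p) =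
      ∑ i, ((p i : ℤ) - 1 - r i) • Lx t p i + (-1 - B) • Lc t p := by
  have hsum : ∑ i, ((p i : ℤ) - 1 - r i) • Lx t p i =
      (t : ℤ) • Lc t p - ∑ i, Lx t p i - ∑ i, r i • Lx t p i := by
    simp only [sub_smul, one_smul, sum_sub_distrib, natCast_zsmul, nsmul_Lx_eq_Lc, sum_const,
      card_univ, Fintype.card_fin]
  rw [hsum]
  module

/-- For every `g ∈ 𝕃(p)`, either `0 ≤ g` or `g ≤ c + ω`, i.e. either `g` lies
in the submonoid `P` generated by `x_1,…,x_t`, or `(c + ω) − g ∈ P`, where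
`ω = (t−2) • c − ∑ i, x_i` is the dualizing element. -/
theorem le_zero_or_le_c_add_omega (t : ℕ) (ht : 3 ≤ t)
    (p : Fin t → ℕ) (hp : ∀ i, 0 < p i) (g : LGroup t p) :
    g ∈ AddSubmonoid.closure (Set.range (Lx t p)) ∨
    (Lc t p + (((t : ℤ) - 2) • Lc t p - ∑ i, Lx t p i)) - g ∈
      AddSubmonoid.closure (Set.range (Lx t p)) := by
  obtain ⟨r, B, hr, rfl⟩ := exists_normal_form hp g
  have ht₀ : 0 < t := by omega
  rcases le_or_gt 0 B with hB | hB
  · exact Or.inl (sum_zsmul_Lx_add_zsmul_Lc_mem_LPos ht₀ (fun i => (hr i).1) hB)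
  · right
    rw [Lc_add_omega_sub_eq]
    exact sum_zsmul_Lx_add_zsmul_Lc_mem_LPos ht₀ (fun i => by linarith [hr i]) (by omega)
end
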